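/- Let A be an n-dimensional evolution algebra over a field F of characteristic ≠ 2 with natural basis e_1, …, e_n. Write e_i² = e_i·e_i, e_i³ = e_i²·e_i, e_i⁴ = e_i³·e_i. Then A is fourth power-associative (i.e. x²·x² = (x²·x)·x for all x ∈ A) if and only if: (1) e_i⁴ = e_i²·e_i² for all i; (2) 2·(e_i²·e_j²) = (e_i²·e_j)·e_j + (e_j²·e_i)·e_i for all i < j; (3) e_i³·e_j + (e_i²·e_j)·e_i = 0 for all i ≠ j; (4) (e_i²·e_j)·e_k + (e_i²·e_k)·e_j = 0 for all i and all j < k with i ≠ j and i ≠ k. -/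

import Mathlib

/-!
Writing `uᵢ = eᵢ²`, right multiplication by `eⱼ` is `z ↦ zⱼ uⱼ`, so for `x = ∑ xₚ eₚ` both sides
of `x²·x² = (x²·x)·x` are polynomials in the coordinates whose coefficients are the products in
conditions (1)–(4); (1) and (2) match the diagonal terms and (3), (4) kill the off-diagonal ones.

Conversely, the identity at `eᵢ`, `eᵢ ± eⱼ` and `eᵢ ± eⱼ ± eₖ` gives (1), (2), (4) and the sum
of condition (3) for `(i, j)` and for `(j, i)`. Separating the two summands is the delicate point,
since over `𝔽₃` no further substitution is available: one plays relation (4) against the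
coordinates of `eᵢ²` and `eⱼ²` and finishes with a case analysis in the plane spanned by them.
-/

open Module

theorem Module.Basis.map_eq_sum_repr_smul {ι R M N : Type*} [CommSemiring R]
    [AddCommMonoid M] [Module R M] [AddCommMonoid N] [Module R N]
    (e : Basis ι R M) (f : M →ₗ[R] N) (s : Finset ι) (hf : ∀ k ∉ s, f (e k) = 0)
    (x : M) : f x = ∑ k ∈ s, e.repr x k • f (e k) := by
  have : f = ∑ k ∈ s, (e.coord k).smulRight (f (e k)) := e.ext fun k => by
    classical
    by_cases hk : k ∈ s
    · simp [Finsupp.single_apply, hk]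
    · simp [Finsupp.single_apply, hk, hf]
  simpa using congr($this x)

section

variable {F A : Type*} [Field F] [AddCommGroup A] [Module F A]

theorem sum_sum_eq_of_add_swap_eq {ι : Type*} [Fintype ι] (h2 : (2 : F) ≠ 0)
    {f g : ι → ι → A} (h : ∀ p q, f p q + f q p = g p q + g q p) :
    ∑ p, ∑ q, f p q = ∑ p, ∑ q, g p q := by
  have two_smul_sum (f : ι → ι → A) :
      (2 : F) • ∑ p, ∑ q, f p q = ∑ p, ∑ q, (f p q + f q p) := by
    simp only [Finset.sum_add_distrib, two_smul]
    rw [Finset.sum_comm (f := fun p q => f q p)]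
  exact smul_right_injective A h2 (by simp only [two_smul_sum, h])

def IsFourthPowerAssociative (m : A →ₗ[F] A →ₗ[F] A) : Prop :=
  ∀ x, m (m x x) (m x x) = m (m (m x x) x) x

variable {m : A →ₗ[F] A →ₗ[F] A}

namespace IsFourthPowerAssociative

theorem two_smul_sq_mul_sq_of_mul_eq_zero (hm : IsFourthPowerAssociative m)
    (h2 : (2 : F) ≠ 0) (hcomm : ∀ x y, m x y = m y x) {x y : A} (hxy : m x y = 0) :
    (2 : F) • m (m x x) (m y y) = m (m (m x x) y) y + m (m (m y y) x) x := by
  have hyx : m y x = 0 := hcomm y x ▸ hxy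
  have hadd := hm (x + y)
  have hsub := hm (x - y)
  simp only [map_add, map_sub, LinearMap.add_apply, LinearMap.sub_apply, hxy, hyx,
    map_zero, LinearMap.zero_apply, hcomm (m y y) (m x x)] at hadd hsub
  apply smul_right_injective A h2
  linear_combination (norm := module) hadd + hsub - (2 : F) • (hm x + hm y)

theorem cube_mul_add_sq_mul_mul_add_swap_eq_zero (hm : IsFourthPowerAssociative m)
    (h2 : (2 : F) ≠ 0) (hcomm : ∀ x y, m x y = m y x) {x y : A} (hxy : m x y = 0) :
    m (m (m x x) x) y + m (m (m x x) y) x + (m (m (m y y) y) x + m (m (m y y) x) y) = 0 := by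
  have hyx : m y x = 0 := hcomm y x ▸ hxy
  have hadd := hm (x + y)
  have hsub := hm (x - y)
  simp only [map_add, map_sub, LinearMap.add_apply, LinearMap.sub_apply, hxy, hyx,
    map_zero, LinearMap.zero_apply] at hadd hsub
  apply smul_right_injective A h2
  linear_combination (norm := module) hsub - hadd

theorem sq_mul_mul_add_sq_mul_mul_eq_zero_of_mul_eq_zero (hm : IsFourthPowerAssociative m)
    (h2 : (2 : F) ≠ 0) (hcomm : ∀ x y, m x y = m y x) {x y z : A}
    (hxy : m x y = 0) (hxz : m x z = 0) (hyz : m y z = 0) :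
    m (m (m x x) y) z + m (m (m x x) z) y = 0 := by
  have hyx : m y x = 0 := hcomm y x ▸ hxy
  have hzx : m z x = 0 := hcomm z x ▸ hxz
  have hzy : m z y = 0 := hcomm z y ▸ hyz
  have hyz_terms := hm.cube_mul_add_sq_mul_mul_add_swap_eq_zero h2 hcomm hyz
  have h₁ := hm (x + y + z)
  have h₂ := hm (x + y - z)
  have h₃ := hm (x - y + z)
  have h₄ := hm (x - y - z)
  simp only [map_add, map_sub, LinearMap.add_apply, LinearMap.sub_apply, hxy, hyx, hxz, hzx,
    hyz, hzy, map_zero, LinearMap.zero_apply] at h₁ h₂ h₃ h₄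
  apply smul_right_injective A (mul_ne_zero h2 h2)
  linear_combination (norm := module) h₂ + h₃ - h₁ - h₄ - (4 : F) • hyz_terms

end IsFourthPowerAssociative

theorem mul_basis_eq_repr_smul {ι : Type*} {e : Basis ι F A}
    (hnat : ∀ i j, i ≠ j → m (e i) (e j) = 0) (z : A) (j : ι) :
    m z (e j) = e.repr z j • m (e j) (e j) := by
  simpa using e.map_eq_sum_repr_smul (m.flip (e j)) {j}
    (fun k hk => hnat k j (by simpa using hk)) z

/-- The instance `u = eᵢ², v = eⱼ², x = eᵢ, y = eⱼ` is condition (3); `hC` and `hI` are what the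
substitutions `eᵢ ± eⱼ` and the relation (4) provide. -/
theorem mul_smul_add_mul_smul_eq_zero (h2 : (2 : F) ≠ 0) {u v x y : A} {a b c d : F}
    (hux : m u x = a • u) (huy : m u y = b • v) (hvx : m v x = c • u) (hvy : m v y = d • v)
    (huu : m u u = (a * a) • u) (hvv : m v v = (d * d) • v)
    (hC : (b * c + c * d) • u + (a * b + b * c) • v = 0)
    (hI : (a * a * c + b * c * d) • u + (2 * b * b * c) • v = 0) :
    (b * c) • u + (a * b) • v = 0 := by
  by_cases hb : b = 0
  · simp [hb]
  by_cases hc : c = 0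
  · subst hc
    linear_combination (norm := module) hC
  obtain ⟨t, rfl⟩ : ∃ t : F, v = t • u := by
    have hne : 2 * b * b * c ≠ 0 := by simp [h2, hb, hc]
    refine ⟨(2 * b * b * c)⁻¹ * -(a * a * c + b * c * d), ?_⟩
    rw [mul_smul, eq_inv_smul_iff₀ hne]
    linear_combination (norm := module) hI
  by_cases hu : u = 0
  · simp [hu]
  have coeff_eq {r s : F} (h : r • u = s • u) : r = s := smul_left_injective F hu h
  have hca : c = t * a := coeff_eq (by simpa [hux, smul_smul] using hvx.symm)
  subst hca
  have htd : t * (b * t) = d * t := coeff_eq (by simpa [huy, smul_smul] using hvy)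
  have htt : t * (t * (a * a)) = d * d * t := coeff_eq (by simpa [huu, smul_smul] using hvv)
  have hI' : a * a * (t * a) + b * (t * a) * d + 2 * b * b * (t * a) * t = 0 :=
    coeff_eq (by linear_combination (norm := module) hI)
  have hcube : (2 * t * a) ^ 3 = 0 := by
    linear_combination 2 * t ^ 2 * hI' + (2 * t ^ 2 * a * b - 6 * t * a * (d + t * b)) * htd
      + 6 * t * a * htt
  have hta : 2 * t * a = 0 := pow_eq_zero_iff (by norm_num) |>.mp hcube
  linear_combination (norm := module) (b * hta) • u

theorem IsFourthPowerAssociative.basis_cube_mul_add_sq_mul_mul_eq_zero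
    (hm : IsFourthPowerAssociative m) (h2 : (2 : F) ≠ 0) (hcomm : ∀ x y, m x y = m y x)
    {ι : Type*} {e : Basis ι F A} (hnat : ∀ i j, i ≠ j → m (e i) (e j) = 0)
    {i j : ι} (hij : i ≠ j) :
    m (m (m (e i) (e i)) (e i)) (e j) + m (m (m (e i) (e i)) (e j)) (e i) = 0 := by
  classical
  have hC := hm.cube_mul_add_sq_mul_mul_add_swap_eq_zero h2 hcomm (hnat i j hij)
  have hE := congr(m $(hm.two_smul_sq_mul_sq_of_mul_eq_zero h2 hcomm (hnat i j hij)) (e i))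
  have huu := hm (e i)
  have hvv := hm (e j)
  -- `z ↦ (eⱼ²·eᵢ)·z + (eⱼ²·z)·eᵢ` kills every `eₖ` with `k ≠ i, j`, by (4).
  have hR := e.map_eq_sum_repr_smul
    (m (m (m (e j) (e j)) (e i)) + m.flip (e i) ∘ₗ m (m (e j) (e j))) {i, j}
    (fun k hk => by
      simp only [Finset.mem_insert, Finset.mem_singleton, not_or] at hk
      exact hm.sq_mul_mul_add_sq_mul_mul_eq_zero_of_mul_eq_zero h2 hcomm (hnat j i hij.symm)
        (hnat j k (Ne.symm hk.2)) (hnat i k (Ne.symm hk.1)))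
    (m (e i) (e i))
  set u := m (e i) (e i)
  set v := m (e j) (e j)
  have hui : m u (e i) = e.repr u i • u := mul_basis_eq_repr_smul hnat u i
  have huj : m u (e j) = e.repr u j • v := mul_basis_eq_repr_smul hnat u j
  have hvi : m v (e i) = e.repr v i • u := mul_basis_eq_repr_smul hnat v i
  have hvj : m v (e j) = e.repr v j • v := mul_basis_eq_repr_smul hnat v j
  simp only [Finset.sum_pair hij, LinearMap.add_apply, LinearMap.comp_apply,
    LinearMap.flip_apply, map_add, map_smul, LinearMap.smul_apply, smul_smul, hui, huj, hvi,
    hvj, hcomm v u] at hC hE hR huu hvv ⊢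
  rw [huu] at hR
  refine (add_comm _ _).trans (mul_smul_add_mul_smul_eq_zero h2 hui huj hvi hvj huu hvv ?_ ?_)
  · linear_combination (norm := module) hC
  · linear_combination (norm := module) hE - (2 : F) • hR

theorem isFourthPowerAssociative_of_basis {ι : Type*} [Fintype ι] (h2 : (2 : F) ≠ 0)
    {e : Basis ι F A} (hnat : ∀ i j, i ≠ j → m (e i) (e j) = 0)
    (hsq : ∀ p q, (2 : F) • m (m (e p) (e p)) (m (e q) (e q)) =
      m (m (m (e p) (e p)) (e q)) (e q) + m (m (m (e q) (e q)) (e p)) (e p))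
    (hcross : ∀ p q r, q ≠ r →
      m (m (m (e p) (e p)) (e q)) (e r) + m (m (m (e p) (e p)) (e r)) (e q) = 0) :
    IsFourthPowerAssociative m := by
  classical
  intro x
  have mul_x (y : A) : m y x = ∑ q, e.repr x q • m y (e q) := by
    simpa using e.map_eq_sum_repr_smul (m y) Finset.univ (by simp) x
  set c := e.repr x
  have hsq_x : m x x = ∑ p, (c p * c p) • m (e p) (e p) := by
    rw [mul_x]
    exact Finset.sum_congr rfl fun p _ => by rw [mul_basis_eq_repr_smul hnat, smul_smul]
  have hcross_x (q r : ι) (hqr : q ≠ r) :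
      m (m (m x x) (e q)) (e r) + m (m (m x x) (e r)) (e q) = 0 := by
    simp only [hsq_x, map_sum, map_smul, LinearMap.sum_apply, LinearMap.smul_apply,
      ← Finset.sum_add_distrib, ← smul_add, hcross _ q r hqr, smul_zero, Finset.sum_const_zero]
  have diag : ∑ r, ∑ q, (c r * c q) • m (m (m x x) (e q)) (e r) =
      ∑ p, (c p * c p) • m (m (m x x) (e p)) (e p) := by
    rw [sum_sum_eq_of_add_swap_eq h2
      (g := fun r q => if r = q then (c r * c r) • m (m (m x x) (e r)) (e r) else 0)]
    · simp
    · intro r q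
      by_cases hrq : r = q
      · subst hrq
        simp
      · simp only [if_neg hrq, if_neg (Ne.symm hrq), add_zero]
        linear_combination (norm := module) (c r * c q) • hcross_x q r (Ne.symm hrq)
  calc m (m x x) (m x x)
      = ∑ p, ∑ q, (c p * c p * (c q * c q)) • m (m (e q) (e q)) (m (e p) (e p)) := by
        simp [hsq_x, map_sum, Finset.smul_sum, smul_smul]
    _ = ∑ p, ∑ q, (c p * c p * (c q * c q)) • m (m (m (e q) (e q)) (e p)) (e p) :=
        sum_sum_eq_of_add_swap_eq h2 fun p q => smul_right_injective A h2 <| by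
          linear_combination (norm := module) (c p * c p * (c q * c q)) • (hsq p q + hsq q p)
    _ = ∑ p, (c p * c p) • m (m (m x x) (e p)) (e p) := by
        simp only [hsq_x, map_sum, map_smul, LinearMap.sum_apply, LinearMap.smul_apply,
          Finset.smul_sum, smul_smul]
    _ = m (m (m x x) x) x := by
        rw [← diag, mul_x (m (m x x) x), mul_x (m x x)]
        simp only [map_sum, map_smul, LinearMap.sum_apply, LinearMap.smul_apply,
          Finset.smul_sum, smul_smul]

theorem isFourthPowerAssociative_iff_basis {ι : Type*} [Fintype ι] (h2 : (2 : F) ≠ 0)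
    (hcomm : ∀ x y, m x y = m y x) {e : Basis ι F A}
    (hnat : ∀ i j, i ≠ j → m (e i) (e j) = 0) :
    IsFourthPowerAssociative m ↔
      (∀ p q, (2 : F) • m (m (e p) (e p)) (m (e q) (e q)) =
        m (m (m (e p) (e p)) (e q)) (e q) + m (m (m (e q) (e q)) (e p)) (e p)) ∧
      (∀ p q r, q ≠ r →
        m (m (m (e p) (e p)) (e q)) (e r) + m (m (m (e p) (e p)) (e r)) (e q) = 0) := by
  refine ⟨fun hm => ⟨fun p q => ?_, fun p q r hqr => ?_⟩,
    fun h => isFourthPowerAssociative_of_basis h2 hnat h.1 h.2⟩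
  · rcases eq_or_ne p q with rfl | hpq
    · rw [two_smul, hm (e p)]
    · exact hm.two_smul_sq_mul_sq_of_mul_eq_zero h2 hcomm (hnat p q hpq)
  · rcases eq_or_ne p q with rfl | hpq
    · exact hm.basis_cube_mul_add_sq_mul_mul_eq_zero h2 hcomm hnat hqr
    rcases eq_or_ne p r with rfl | hpr
    · rw [add_comm]
      exact hm.basis_cube_mul_add_sq_mul_mul_eq_zero h2 hcomm hnat hqr.symm
    · exact hm.sq_mul_mul_add_sq_mul_mul_eq_zero_of_mul_eq_zero h2 hcomm
        (hnat p q hpq) (hnat p r hpr) (hnat q r hqr)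

theorem forall_two_smul_sq_mul_sq_iff {ι : Type*} [LinearOrder ι] (h2 : (2 : F) ≠ 0)
    (hcomm : ∀ x y, m x y = m y x) (e : ι → A) :
    ((∀ i, m (m (m (e i) (e i)) (e i)) (e i) = m (m (e i) (e i)) (m (e i) (e i))) ∧
      ∀ i j, i < j → (2 : F) • m (m (e i) (e i)) (m (e j) (e j)) =
        m (m (m (e i) (e i)) (e j)) (e j) + m (m (m (e j) (e j)) (e i)) (e i)) ↔
    ∀ p q, (2 : F) • m (m (e p) (e p)) (m (e q) (e q)) =
      m (m (m (e p) (e p)) (e q)) (e q) + m (m (m (e q) (e q)) (e p)) (e p) := by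
  refine ⟨fun ⟨hdiag, hlt⟩ p q => ?_, fun h => ⟨fun i => ?_, fun i j _ => h i j⟩⟩
  · rcases lt_trichotomy p q with hpq | rfl | hqp
    · exact hlt p q hpq
    · rw [two_smul, hdiag]
    · rw [hcomm (m (e p) (e p)), add_comm]
      exact hlt q p hqp
  · exact (smul_right_injective A h2 ((h i i).trans (two_smul F _).symm)).symm

theorem forall_sq_mul_mul_add_sq_mul_mul_eq_zero_iff {ι : Type*} [LinearOrder ι] (e : ι → A) :
    ((∀ i j, i ≠ j →
        m (m (m (e i) (e i)) (e i)) (e j) + m (m (m (e i) (e i)) (e j)) (e i) = 0) ∧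
      ∀ i j k, j < k → i ≠ j → i ≠ k →
        m (m (m (e i) (e i)) (e j)) (e k) + m (m (m (e i) (e i)) (e k)) (e j) = 0) ↔
    ∀ p q r, q ≠ r →
      m (m (m (e p) (e p)) (e q)) (e r) + m (m (m (e p) (e p)) (e r)) (e q) = 0 := by
  refine ⟨fun ⟨hself, hlt⟩ p q r hqr => ?_,
    fun h => ⟨fun i j => h i i j, fun i j k hjk _ _ => h i j k hjk.ne⟩⟩
  rcases eq_or_ne p q with rfl | hpq
  · exact hself p r hqr
  rcases eq_or_ne p r with rfl | hpr
  · rw [add_comm]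
    exact hself p q hqr.symm
  rcases hqr.lt_or_gt with hlt' | hlt'
  · exact hlt p q r hlt' hpq hpr
  · rw [add_comm]
    exact hlt p r q hlt' hpr hpq

end

theorem evolution_algebra_fourth_power_associative_iff
    (F : Type*) [Field F] (h2 : (2 : F) ≠ 0)
    (A : Type*) [AddCommGroup A] [Module F A]
    (m : A →ₗ[F] A →ₗ[F] A) (hcomm : ∀ x y : A, m x y = m y x)
    (n : ℕ) (e : Module.Basis (Fin n) F A)
    (hnat : ∀ i j : Fin n, i ≠ j → m (e i) (e j) = 0) :
    (∀ x : A, m (m x x) (m x x) = m (m (m x x) x) x) ↔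
      ((∀ i : Fin n,
          m (m (m (e i) (e i)) (e i)) (e i) = m (m (e i) (e i)) (m (e i) (e i))) ∧
       (∀ i j : Fin n, i < j →
          (2 : F) • m (m (e i) (e i)) (m (e j) (e j)) =
            m (m (m (e i) (e i)) (e j)) (e j) + m (m (m (e j) (e j)) (e i)) (e i)) ∧
       (∀ i j : Fin n, i ≠ j →
          m (m (m (e i) (e i)) (e i)) (e j) + m (m (m (e i) (e i)) (e j)) (e i) = 0) ∧
       (∀ i j k : Fin n, j < k → i ≠ j → i ≠ k →
          m (m (m (e i) (e i)) (e j)) (e k) + m (m (m (e i) (e i)) (e k)) (e j) = 0)) := by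
  rw [← and_assoc, forall_two_smul_sq_mul_sq_iff h2 hcomm,
    forall_sq_mul_mul_add_sq_mul_mul_eq_zero_iff]
  exact isFourthPowerAssociative_iff_basis h2 hcomm hnat
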